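/- arXiv:2412.17500 — 3 statements merged into one kernel-verified Lean document; each statement's English description precedes it below -/
import Mathlib

section
/- For every integer n ≥ 4, the oriented Ramsey number of CP(2,2;n−4) equals n+1; that is, every tournament on n+1 vertices contains a copy of CP(2,2;n−4), and there is a tournament on n vertices containing no copy of CP(2,2;n−4). -/
/-!
Upper bound: a copy of `CP(2,2;k)` is grown one path vertex at a time while two vertices `v`, `w`
are unused. A vertex beaten by some vertex of the path `d → ⋯` can be inserted into it without
moving `d`. If `v` or `w` cannot be inserted, it beats `d`. If moreover one of the top vertices
`a`, `b`, `c` can be inserted (try `a` first), the other four vertices of `{a, b, c, v, w}` all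
beat `d`; one of them beats two others, and these three form a new top over `d`. If none of the
five can be inserted, all of them beat `d`, and a copy of `C(2,2)` among them (every tournament on
five vertices has one) is put in front of the path.

Lower bound: a cyclic triangle dominating a transitive tournament on `n - 3` vertices.
-/

/-- A tournament: an irreflexive relation such that for any two distinct
vertices exactly one of the two possible arcs is present. -/
def IsTournament {V : Type*} (r : V → V → Prop) : Prop :=
  (∀ x, ¬ r x x) ∧ ∀ x y, x ≠ y → (r x y ↔ ¬ r y x)

/-- `Contains r e` : the digraph `r` contains a copy of the oriented graph `e`. -/
def Contains {V : Type*} {H : Type*} (r : V → V → Prop) (e : H → H → Prop) : Prop :=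
  ∃ φ : H → V, Function.Injective φ ∧ ∀ u v, e u v → r (φ u) (φ v)

/-- The antidirected cycle `AC_{2k}` on `ZMod (2k)`: the arcs go from each
even vertex `u` to its two neighbours `u + 1` and `u - 1` on the cycle. -/
def acArc (k : ℕ) (u v : ZMod (2 * k)) : Prop :=
  (∃ j : ZMod (2 * k), u = 2 * j) ∧ (v = u + 1 ∨ v = u - 1)

/-- `CP(2,2;ℓ)`: the oriented graph on `ℓ + 4` vertices (0-indexed; vertex
`v_i` of the paper is index `i - 1`) with arcs
`(0,1), (0,2), (1,3), (2,3)` and `(j, j+1)` for `3 ≤ j`. In particular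
`cpArc 0` is the oriented 4-cycle `C(2,2)`. -/
def cpArc (ℓ : ℕ) (u v : Fin (ℓ + 4)) : Prop :=
  (u.val = 0 ∧ v.val = 1) ∨ (u.val = 0 ∧ v.val = 2) ∨
  (u.val = 1 ∧ v.val = 3) ∨ (u.val = 2 ∧ v.val = 3) ∨
  (3 ≤ u.val ∧ v.val = u.val + 1)

namespace IsTournament

variable {V W : Type*} {r : V → V → Prop}

theorem ne_of_rel (hT : IsTournament r) {x y : V} (h : r x y) : x ≠ y := by
  rintro rfl
  exact hT.1 x h

theorem rel_of_not_rel (hT : IsTournament r) {x y : V} (hxy : x ≠ y) (h : ¬ r x y) : r y x := by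
  by_contra h'
  exact h ((hT.2 x y hxy).mpr h')

theorem rel_or_rel (hT : IsTournament r) {x y : V} (hxy : x ≠ y) : r x y ∨ r y x :=
  (em _).imp_right (hT.rel_of_not_rel hxy)

theorem not_rel_of_rel (hT : IsTournament r) {x y : V} (h : r x y) : ¬ r y x :=
  (hT.2 x y (hT.ne_of_rel h)).mp h

theorem comap (hT : IsTournament r) {f : W → V} (hf : Function.Injective f) :
    IsTournament (fun i j => r (f i) (f j)) :=
  ⟨fun i => hT.1 (f i), fun i j hij => hT.2 (f i) (f j) (hf.ne hij)⟩

/-- Insert `x` right after the last vertex `y` with `y → x`: the next vertex, if any, is beaten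
by `x`. -/
theorem exists_isChain_cons_perm (hT : IsTournament r) {x : V} :
    ∀ {d : V} {P : List V}, (d :: P).IsChain r → x ∉ d :: P → (∃ y ∈ d :: P, r y x) →
      ∃ P' : List V, (d :: P').IsChain r ∧ P'.Perm (x :: P)
  | d, [], _, _, hy => ⟨[x], by simpa using hy, .refl _⟩
  | d, e :: P, hch, hx, hy => by
    rw [List.isChain_cons_cons] at hch
    by_cases hdirect : r d x ∧ r x e
    · exact ⟨x :: e :: P, .cons_cons hdirect.1 (.cons_cons hdirect.2 hch.2), .refl _⟩
    have hy' : ∃ y ∈ e :: P, r y x := by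
      by_cases hdx : r d x
      · exact ⟨e, by simp, hT.rel_of_not_rel (fun h => hx (by simp [h])) (hdirect ⟨hdx, ·⟩)⟩
      · obtain ⟨y, hy, hyx⟩ := hy
        rcases List.mem_cons.mp hy with rfl | hy
        · exact absurd hyx hdx
        · exact ⟨y, hy, hyx⟩
    obtain ⟨P', hch', hperm⟩ := exists_isChain_cons_perm hT hch.2 (fun h => hx (by simp_all)) hy'
    exact ⟨e :: P', .cons_cons hch.1 hch', (hperm.cons e).trans (.swap x e P)⟩

/-- Rédei's theorem. -/
theorem exists_isChain_perm (hT : IsTournament r) :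
    ∀ {l : List V}, l.Nodup → ∃ l' : List V, l'.IsChain r ∧ l'.Perm l
  | [], _ => ⟨[], .nil, .refl _⟩
  | x :: l, hl => by
    rw [List.nodup_cons] at hl
    obtain ⟨l', hch, hperm⟩ := exists_isChain_perm hT hl.2
    have hx : x ∉ l' := hperm.mem_iff.not.mpr hl.1
    match l', hch, hperm, hx with
    | [], _, hperm, _ => exact ⟨[x], .singleton x, hperm.cons x⟩
    | d :: P, hch, hperm, hx =>
      by_cases hins : ∃ y ∈ d :: P, r y x
      · obtain ⟨P', hch', hperm'⟩ := hT.exists_isChain_cons_perm hch hx hins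
        exact ⟨d :: P', hch', ((hperm'.cons d).trans (.swap x d P)).trans (hperm.cons x)⟩
      · have hxd : r x d := hT.rel_of_not_rel (fun h => hx (by simp [h])) (hins ⟨d, by simp, ·⟩)
        exact ⟨x :: d :: P, .cons_cons hxd hch, hperm.cons x⟩

theorem exists_injective_path (hT : IsTournament r) {l : List V} (hl : l.Nodup) {n : ℕ}
    (hn : l.length = n) :
    ∃ x : Fin n → V, Function.Injective x ∧ (∀ i, x i ∈ l) ∧
      ∀ i j : Fin n, j.val = i.val + 1 → r (x i) (x j) := by
  obtain ⟨l', hch, hperm⟩ := hT.exists_isChain_perm hl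
  have hlen : l'.length = n := hperm.length_eq.trans hn
  refine ⟨fun i => l'[i.val], fun i j hij => ?_, fun i => hperm.mem_iff.mp (List.getElem_mem _),
    fun i j hij => ?_⟩
  · exact Fin.ext (((hperm.nodup_iff.mpr hl).getElem_inj_iff).mp hij)
  · obtain ⟨j, hj⟩ := j
    simp only at hij
    subst hij
    exact List.isChain_iff_getElem.mp hch i (by omega)

theorem exists_beats_two_fin4 {R : Fin 4 → Fin 4 → Prop} (hR : IsTournament R) (h01 : R 0 1)
    (h23 : R 2 3) : ∃ q q₁ q₂, q₁ ≠ q₂ ∧ R q q₁ ∧ R q q₂ := by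
  rcases hR.rel_or_rel (show (0 : Fin 4) ≠ 2 by decide) with h02 | h20
  · exact ⟨0, 1, 2, by decide, h01, h02⟩
  · exact ⟨2, 0, 3, by decide, h20, h23⟩

theorem exists_c22_fin5 {R : Fin 5 → Fin 5 → Prop} (hR : IsTournament R) (h01 : R 0 1)
    (h12 : R 1 2) (h23 : R 2 3) (h34 : R 3 4) :
    ∃ a b c d, b ≠ c ∧ R a b ∧ R a c ∧ R b d ∧ R c d := by
  have total (i j : Fin 5) (hij : i ≠ j := by decide) : R i j ∨ R j i :=
    hR.rel_or_rel hij
  rcases total 0 2 with h02 | h20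
  · rcases total 1 3 with h13 | h31
    · exact ⟨0, 1, 2, 3, by decide, h01, h02, h13, h23⟩
    rcases total 2 4 with h24 | h42
    · rcases total 1 4 with h14 | h41
      · exact ⟨0, 1, 2, 4, by decide, h01, h02, h14, h24⟩
      · exact ⟨2, 3, 4, 1, by decide, h23, h24, h31, h41⟩
    · exact ⟨3, 1, 4, 2, by decide, h31, h34, h12, h42⟩
  · rcases total 3 1 with h31 | h13
    · exact ⟨2, 0, 3, 1, by decide, h20, h23, h01, h31⟩
    rcases total 2 4 with h24 | h42
    · exact ⟨1, 2, 3, 4, by decide, h12, h13, h24, h34⟩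
    rcases total 3 0 with h30 | h03
    · exact ⟨1, 2, 3, 0, by decide, h12, h13, h20, h30⟩
    rcases total 0 4 with h04 | h40
    · exact ⟨2, 0, 3, 4, by decide, h20, h23, h04, h34⟩
    · exact ⟨4, 0, 2, 3, by decide, h40, h42, h03, h23⟩

theorem exists_beats_two (hT : IsTournament r) {l : List V} (hl : l.Nodup) (h4 : l.length = 4) :
    ∃ q ∈ l, ∃ q₁ ∈ l, ∃ q₂ ∈ l, q₁ ≠ q₂ ∧ r q q₁ ∧ r q q₂ := by
  obtain ⟨x, hx, hmem, hpath⟩ := hT.exists_injective_path hl h4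
  obtain ⟨q, q₁, q₂, hne, h₁, h₂⟩ :=
    exists_beats_two_fin4 (hT.comap hx) (hpath 0 1 rfl) (hpath 2 3 rfl)
  exact ⟨x q, hmem q, x q₁, hmem q₁, x q₂, hmem q₂, hx.ne hne, h₁, h₂⟩

theorem exists_c22 (hT : IsTournament r) {l : List V} (hl : l.Nodup) (h5 : l.length = 5) :
    ∃ a ∈ l, ∃ b ∈ l, ∃ c ∈ l, ∃ d ∈ l, b ≠ c ∧ r a b ∧ r a c ∧ r b d ∧ r c d := by
  obtain ⟨x, hx, hmem, hpath⟩ := hT.exists_injective_path hl h5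
  obtain ⟨a, b, c, d, hne, hab, hac, hbd, hcd⟩ := exists_c22_fin5 (hT.comap hx)
    (hpath 0 1 rfl) (hpath 1 2 rfl) (hpath 2 3 rfl) (hpath 3 4 rfl)
  exact ⟨x a, hmem a, x b, hmem b, x c, hmem c, x d, hmem d, hx.ne hne, hab, hac, hbd, hcd⟩

theorem nodup_of_c22 (hT : IsTournament r) {a b c d : V} (hbc : b ≠ c) (hab : r a b)
    (hac : r a c) (hbd : r b d) (hcd : r c d) : [a, b, c, d].Nodup := by
  have had : a ≠ d := by
    rintro rfl
    exact hT.not_rel_of_rel hab hbd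
  simp [hT.ne_of_rel hab, hT.ne_of_rel hac, had, hbc, hT.ne_of_rel hbd, hT.ne_of_rel hcd]

end IsTournament

section CP

variable {V : Type*} {r : V → V → Prop}

/-- The vertices `0, 1, 2, 3, 4, …` of a copy of `cpArc P.length`. -/
structure IsCP (r : V → V → Prop) (a b c d : V) (P : List V) : Prop where
  nodup : (a :: b :: c :: d :: P).Nodup
  rel_ab : r a b
  rel_ac : r a c
  rel_bd : r b d
  rel_cd : r c d
  isChain : (d :: P).IsChain r

theorem IsCP.contains {a b c d : V} {P : List V} (h : IsCP r a b c d P) :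
    Contains r (cpArc P.length) := by
  set L := a :: b :: c :: d :: P
  have hL : L.length = P.length + 4 := by simp [L]
  refine ⟨fun i => L[i.val], fun i j hij => Fin.ext (h.nodup.getElem_inj_iff.mp hij), ?_⟩
  rintro ⟨i, hi⟩ ⟨j, hj⟩ harc
  simp only [cpArc] at harc
  rcases harc with ⟨rfl, rfl⟩ | ⟨rfl, rfl⟩ | ⟨rfl, rfl⟩ | ⟨rfl, rfl⟩ | ⟨hi3, rfl⟩
  · exact h.rel_ab
  · exact h.rel_ac
  · exact h.rel_bd
  · exact h.rel_cd
  · obtain ⟨k, rfl⟩ : ∃ k, i = k + 3 := ⟨i - 3, by omega⟩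
    exact List.isChain_iff_getElem.mp h.isChain k (by simp at hj ⊢; omega)

theorem IsCP.insert (hT : IsTournament r) {a b c d x : V} {P : List V} (h : IsCP r a b c d P)
    (hx : (x :: a :: b :: c :: d :: P).Nodup) (hins : ∃ y ∈ d :: P, r y x) :
    ∃ P', IsCP r a b c d P' ∧ P'.length = P.length + 1 := by
  have hxP : x ∉ d :: P := fun hmem => (List.nodup_cons.mp hx).1 (by simp_all)
  obtain ⟨P', hch, hperm⟩ := hT.exists_isChain_cons_perm h.isChain hxP hins
  have hperm' : (a :: b :: c :: d :: P').Perm (x :: a :: b :: c :: d :: P) :=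
    (((hperm.cons d).cons c).cons b).cons a |>.trans (List.perm_middle (l₁ := [a, b, c, d]))
  exact ⟨P', ⟨hperm'.nodup_iff.mpr hx, h.rel_ab, h.rel_ac, h.rel_bd, h.rel_cd, hch⟩,
    by simp [hperm.length_eq]⟩

theorem exists_isCP_of_four (hT : IsTournament r) {d x : V} {P S : List V}
    (hch : (d :: P).IsChain r) (hS : S.length = 4) (hnd : (S ++ x :: d :: P).Nodup)
    (hSd : ∀ s ∈ S, r s d) (hins : ∃ y ∈ d :: P, r y x) :
    ∃ a b c d' P', IsCP r a b c d' P' ∧ P'.length = P.length + 1 := by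
  obtain ⟨hSnd, hxnd, hdisj⟩ := List.nodup_append.mp hnd
  obtain ⟨q, hq, q₁, hq₁, q₂, hq₂, hne, h₁, h₂⟩ := hT.exists_beats_two hSnd hS
  obtain ⟨P', hch', hperm⟩ := hT.exists_isChain_cons_perm hch (List.nodup_cons.mp hxnd).1 hins
  have hperm' : (d :: P').Perm (x :: d :: P) := (hperm.cons d).trans (.swap x d P)
  refine ⟨q, q₁, q₂, d, P', ⟨?_, h₁, h₂, hSd q₁ hq₁, hSd q₂ hq₂, hch'⟩, by simp [hperm.length_eq]⟩
  refine (List.nodup_append (l₁ := [q, q₁, q₂])).mpr ⟨?_, hperm'.nodup_iff.mpr hxnd, ?_⟩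
  · simp [hT.ne_of_rel h₁, hT.ne_of_rel h₂, hne]
  · intro s hs t ht
    have hsS : s ∈ S := by
      simp only [List.mem_cons, List.not_mem_nil, or_false] at hs
      rcases hs with rfl | rfl | rfl <;> assumption
    exact hdisj s hsS t (hperm'.mem_iff.mp ht)

theorem exists_isCP_cons_of_five (hT : IsTournament r) {d : V} {P S : List V}
    (hch : (d :: P).IsChain r) (hS : S.length = 5) (hnd : (S ++ d :: P).Nodup)
    (hSd : ∀ s ∈ S, r s d) : ∃ a b c d', IsCP r a b c d' (d :: P) := by
  obtain ⟨hSnd, hPnd, hdisj⟩ := List.nodup_append.mp hnd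
  obtain ⟨a, ha, b, hb, c, hc, d', hd', hbc, hab, hac, hbd, hcd⟩ := hT.exists_c22 hSnd hS
  refine ⟨a, b, c, d', ⟨?_, hab, hac, hbd, hcd, .cons_cons (hSd d' hd') hch⟩⟩
  refine (List.nodup_append (l₁ := [a, b, c, d'])).mpr
    ⟨hT.nodup_of_c22 hbc hab hac hbd hcd, hPnd, ?_⟩
  intro s hs
  simp only [List.mem_cons, List.not_mem_nil, or_false] at hs
  rcases hs with rfl | rfl | rfl | rfl <;> exact hdisj _ ‹_›

theorem IsCP.extend (hT : IsTournament r) {a b c d v w : V} {P : List V}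
    (h : IsCP r a b c d P) (hM : (v :: w :: a :: b :: c :: d :: P).Nodup) :
    ∃ a' b' c' d' P', IsCP r a' b' c' d' P' ∧ P'.length = P.length + 1 := by
  have rel_d {x : V} (hxd : x ≠ d) (hx : ¬ ∃ y ∈ d :: P, r y x) : r x d :=
    hT.rel_of_not_rel hxd.symm (fun hdx => hx ⟨d, List.mem_cons_self, hdx⟩)
  by_cases hv : ∃ y ∈ d :: P, r y v
  · exact ⟨a, b, c, d, h.insert hT (hM.sublist (by simp)) hv⟩
  by_cases hw : ∃ y ∈ d :: P, r y w
  · exact ⟨a, b, c, d, h.insert hT hM.of_cons hw⟩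
  have hvd : r v d := rel_d (by rintro rfl; simp at hM) hv
  have hwd : r w d := rel_d (by rintro rfl; simp at hM) hw
  by_cases ha : ∃ y ∈ d :: P, r y a
  · exact exists_isCP_of_four hT h.isChain (S := [v, w, b, c]) rfl
      (hM.perm (((List.perm_middle (l₁ := [b, c])).cons w).cons v).symm)
      (by simp [hvd, hwd, h.rel_bd, h.rel_cd]) ha
  have had : r a d := rel_d (by rintro rfl; simp at hM) ha
  by_cases hb : ∃ y ∈ d :: P, r y b
  · exact exists_isCP_of_four hT h.isChain (S := [v, w, a, c]) rfl
      (hM.perm ((((List.perm_middle (l₁ := [c])).cons a).cons w).cons v).symm)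
      (by simp [hvd, hwd, had, h.rel_cd]) hb
  by_cases hc : ∃ y ∈ d :: P, r y c
  · exact exists_isCP_of_four hT h.isChain (S := [v, w, a, b]) rfl hM
      (by simp [hvd, hwd, had, h.rel_bd]) hc
  obtain ⟨a', b', c', d', h'⟩ := exists_isCP_cons_of_five hT h.isChain (S := [v, w, a, b, c]) rfl
    hM (by simp [hvd, hwd, had, h.rel_bd, h.rel_cd])
  exact ⟨a', b', c', d', d :: P, h', rfl⟩

theorem IsTournament.exists_isCP [Fintype V] (hT : IsTournament r) :
    ∀ k, k + 5 ≤ Fintype.card V → ∃ a b c d P, IsCP r a b c d P ∧ P.length = k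
  | 0, hcard => by
    classical
    obtain ⟨S, -, hS⟩ :=
      Finset.exists_subset_card_eq (s := Finset.univ) (n := 5) (by simpa using hcard)
    obtain ⟨a, -, b, -, c, -, d, -, hbc, hab, hac, hbd, hcd⟩ :=
      hT.exists_c22 S.nodup_toList (by simp [hS])
    exact ⟨a, b, c, d, [], ⟨hT.nodup_of_c22 hbc hab hac hbd hcd, hab, hac, hbd, hcd, .singleton d⟩,
      rfl⟩
  | k + 1, hcard => by
    classical
    obtain ⟨a, b, c, d, P, h, rfl⟩ := hT.exists_isCP k (by omega)
    have hfresh : 1 < (Finset.univ \ (a :: b :: c :: d :: P).toFinset).card := by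
      rw [Finset.card_sdiff_of_subset (Finset.subset_univ _), Finset.card_univ,
        List.toFinset_card_of_nodup h.nodup]
      simp only [List.length_cons]
      omega
    obtain ⟨v, hv, w, hw, hvw⟩ := Finset.one_lt_card.mp hfresh
    simp only [Finset.mem_sdiff, Finset.mem_univ, List.mem_toFinset, true_and] at hv hw
    exact h.extend (v := v) (w := w) hT
      (List.nodup_cons.mpr ⟨by simp_all, List.nodup_cons.mpr ⟨hw, h.nodup⟩⟩)

theorem IsTournament.contains_cpArc [Fintype V] (hT : IsTournament r) {m : ℕ}
    (hcard : m + 5 ≤ Fintype.card V) : Contains r (cpArc m) := by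
  obtain ⟨a, b, c, d, P, h, rfl⟩ := hT.exists_isCP m hcard
  exact h.contains

end CP

def triangleOverTransitive (m : ℕ) (i j : Fin (m + 4)) : Prop :=
  (i.val < 3 ∧ j.val < 3 ∧ (i.val + 1) % 3 = j.val) ∨
  (i.val < 3 ∧ 3 ≤ j.val) ∨
  (3 ≤ i.val ∧ 3 ≤ j.val ∧ i.val < j.val)

theorem isTournament_triangleOverTransitive (m : ℕ) :
    IsTournament (triangleOverTransitive m) := by
  refine ⟨fun i => by simp only [triangleOverTransitive]; omega, fun i j hij => ?_⟩
  have : i.val ≠ j.val := Fin.val_ne_of_ne hij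
  simp only [triangleOverTransitive]
  omega

/-- In a copy, the sink `φ 3` has two distinct in-neighbours, so it is not on the triangle; the path
from it climbs through the transitive part, which forces `φ 3 = 3`; then `φ 1`, `φ 2` and `φ 0`
all lie on the triangle, where `φ 0` has only one out-neighbour. -/
theorem not_contains_cpArc_triangleOverTransitive (m : ℕ) :
    ¬ Contains (triangleOverTransitive m) (cpArc m) := by
  rintro ⟨φ, hφ, harc⟩
  have arc (i j : ℕ) (hi : i < m + 4) (hj : j < m + 4) (h : cpArc m ⟨i, hi⟩ ⟨j, hj⟩) :
      triangleOverTransitive m (φ ⟨i, hi⟩) (φ ⟨j, hj⟩) := harc _ _ h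
  have h01 := arc 0 1 (by omega) (by omega) (by simp [cpArc])
  have h02 := arc 0 2 (by omega) (by omega) (by simp [cpArc])
  have h13 := arc 1 3 (by omega) (by omega) (by simp [cpArc])
  have h23 := arc 2 3 (by omega) (by omega) (by simp [cpArc])
  have h12 : (φ ⟨1, by omega⟩).val ≠ (φ ⟨2, by omega⟩).val := fun h => by
    simpa using hφ (Fin.ext h)
  simp only [triangleOverTransitive] at h01 h02 h13 h23
  have h3 : 3 ≤ (φ ⟨3, by omega⟩).val := by omega
  have climb : ∀ j (hj : 3 + j < m + 4), (φ ⟨3, by omega⟩).val + j ≤ (φ ⟨3 + j, hj⟩).val := by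
    intro j
    induction j with
    | zero => simp
    | succ j ih =>
      intro hj
      have step := arc (3 + j) (3 + (j + 1)) (by omega) hj (by simp [cpArc]; omega)
      have := ih (by omega)
      simp only [triangleOverTransitive] at step
      omega
  have := climb m (by omega)
  have := (φ ⟨3 + m, by omega⟩).isLt
  omega

/-- Theorem 3: for `n ≥ 4`, `→r(CP(2,2; n-4)) = n + 1`. -/
theorem orientedRamsey_cp (n : ℕ) (hn : 4 ≤ n) :
    (∀ (V : Type) (_ : Fintype V) (r : V → V → Prop), IsTournament r →
        Fintype.card V = n + 1 → Contains r (cpArc (n - 4))) ∧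
    (∃ (V : Type) (_ : Fintype V) (r : V → V → Prop), IsTournament r ∧
        Fintype.card V = n ∧ ¬ Contains r (cpArc (n - 4))) := by
  obtain ⟨m, rfl⟩ : ∃ m, n = m + 4 := ⟨n - 4, by omega⟩
  rw [Nat.add_sub_cancel]
  exact ⟨fun V _ r hT hcard => hT.contains_cpArc (by omega),
    ⟨Fin (m + 4), inferInstance, triangleOverTransitive m, isTournament_triangleOverTransitive m,
      Fintype.card_fin _, not_contains_cpArc_triangleOverTransitive m⟩⟩
end

section
/- Let n ≥ 4 and let T be the tournament on n vertices constructed as follows: take a tournament T_4^* on 4 vertices consisting of a directed 3-cycle all of whose vertices dominate a fourth vertex, take any tournament T' on the remaining n−4 vertices, and orient every arc from a vertex of T_4^* to a vertex of T'. Then T contains no copy of CP(2,2;n−4). -/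
/-! The vertex set `A` of `T₄*` dominates the rest of the tournament, so no arc enters `A` from
outside and the preimage of `A` under a copy `φ` of `CP(2,2;n-4)` is closed under in-neighbours.
Since `|T| = n`, `φ` is a bijection, so some path vertex `v_j` with `j ≥ 4` lands in `A`; walking
back along the path and through the 4-cycle then puts `v_1, …, v_4` into `A`. But `T₄*` contains
no `C(2,2)`: its sink `w` can be none of `v_1, v_2, v_3`, so `v_1` would be a vertex of the
3-cycle dominating the two others. -/

theorem IsTournament.asymm {V : Type*} {r : V → V → Prop} (ht : IsTournament r) {x y : V}
    (hxy : r x y) : ¬ r y x := by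
  obtain rfl | hne := eq_or_ne x y
  · exact absurd hxy (ht.1 x)
  · exact (ht.2 x y hne).mp hxy

theorem IsTournament.mem_of_rel_of_dominates {V : Type*} {r : V → V → Prop}
    (ht : IsTournament r) {A : Set V} (hdom : ∀ x ∈ A, ∀ y ∉ A, r x y) {x y : V}
    (hxy : r x y) (hy : y ∈ A) : x ∈ A := by
  by_contra hx
  exact ht.asymm hxy (hdom y hy x hx)

theorem exists_le_apply_of_injective {k : ℕ} {g : Fin (k + 1) → ℕ} (hg : g.Injective) :
    ∃ i, k ≤ g i := by
  by_contra! h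
  have := Fintype.card_le_of_injective (fun i ↦ (⟨g i, h i⟩ : Fin k))
    fun i j hij ↦ hg (Fin.mk.inj_iff.mp hij)
  simp at this

theorem cpArc_of_three_le {ℓ : ℕ} {u v : Fin (ℓ + 4)} (hu : 3 ≤ u.val) (hv : v.val = u.val + 1) :
    cpArc ℓ u v :=
  Or.inr <| Or.inr <| Or.inr <| Or.inr ⟨hu, hv⟩

theorem three_mem_of_cpArc_closed {ℓ : ℕ} {S : Set (Fin (ℓ + 4))}
    (hS : ∀ u v, cpArc ℓ u v → v ∈ S → u ∈ S) {j : Fin (ℓ + 4)} (hj : 3 ≤ j.val) (hjS : j ∈ S) :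
    (⟨3, by omega⟩ : Fin (ℓ + 4)) ∈ S := by
  obtain ⟨d, hd⟩ := Nat.exists_eq_add_of_le hj
  induction d generalizing j with
  | zero => rwa [show j = ⟨3, _⟩ from Fin.ext hd] at hjS
  | succ d ih =>
    exact ih (j := ⟨3 + d, by omega⟩) le_self_add
      (hS _ _ (cpArc_of_three_le le_self_add (by simp [hd]; omega)) hjS) rfl

theorem cpArc_head_mem_of_closed {ℓ : ℕ} {S : Set (Fin (ℓ + 4))}
    (hS : ∀ u v, cpArc ℓ u v → v ∈ S → u ∈ S) {j : Fin (ℓ + 4)} (hj : 3 ≤ j.val) (hjS : j ∈ S) :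
    (⟨0, by omega⟩ : Fin (ℓ + 4)) ∈ S ∧ (⟨1, by omega⟩ : Fin (ℓ + 4)) ∈ S ∧
      (⟨2, by omega⟩ : Fin (ℓ + 4)) ∈ S ∧ (⟨3, by omega⟩ : Fin (ℓ + 4)) ∈ S := by
  have h3 := three_mem_of_cpArc_closed hS hj hjS
  have h1 := hS ⟨1, by omega⟩ _ (by simp [cpArc]) h3
  have h2 := hS ⟨2, by omega⟩ _ (by simp [cpArc]) h3
  exact ⟨hS ⟨0, by omega⟩ _ (by simp [cpArc]) h1, h1, h2, h3⟩

theorem not_diamond_of_triangle_dominating_sink {V : Type*} {r : V → V → Prop}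
    (ht : IsTournament r) {c0 c1 c2 w : V}
    (h01 : r c0 c1) (h12 : r c1 c2) (h20 : r c2 c0)
    (h0w : r c0 w) (h1w : r c1 w) (h2w : r c2 w) {a b c d : V}
    (ha : a ∈ ({c0, c1, c2, w} : Set V)) (hb : b ∈ ({c0, c1, c2, w} : Set V))
    (hc : c ∈ ({c0, c1, c2, w} : Set V)) (hd : d ∈ ({c0, c1, c2, w} : Set V)) (hbc : b ≠ c)
    (hab : r a b) (hac : r a c) (hbd : r b d) (hcd : r c d) : False := by
  have hw : ∀ x ∈ ({c0, c1, c2, w} : Set V), ¬ r w x := by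
    simp only [Set.mem_insert_iff, Set.mem_singleton_iff, forall_eq_or_imp, forall_eq]
    exact ⟨ht.asymm h0w, ht.asymm h1w, ht.asymm h2w, ht.1 w⟩
  have hbw : b ≠ w := by rintro rfl; exact hw d hd hbd
  have hcw : c ≠ w := by rintro rfl; exact hw d hd hcd
  have haw : a ≠ w := by rintro rfl; exact hw b hb hab
  have := ht.asymm h01
  have := ht.asymm h12
  have := ht.asymm h20
  have := ht.1 a
  simp only [Set.mem_insert_iff, Set.mem_singleton_iff] at ha hb hc
  rcases ha with rfl | rfl | rfl | rfl <;> rcases hb with rfl | rfl | rfl | rfl <;>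
    rcases hc with rfl | rfl | rfl | rfl <;> tauto

/-- The lower-bound construction for Theorem 3: a tournament on `n ≥ 4`
vertices consisting of a directed triangle `c0 → c1 → c2 → c0` dominating a
vertex `w`, with all four of these vertices dominating all remaining vertices
(which induce an arbitrary tournament), contains no copy of `CP(2,2; n-4)`. -/
theorem cp_lower_bound_construction (n : ℕ) (hn : 4 ≤ n)
    (V : Type) (_ : Fintype V) (r : V → V → Prop) (ht : IsTournament r)
    (hcard : Fintype.card V = n) (c0 c1 c2 w : V)
    (hd01 : c0 ≠ c1) (hd02 : c0 ≠ c2) (hd0w : c0 ≠ w)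
    (hd12 : c1 ≠ c2) (hd1w : c1 ≠ w) (hd2w : c2 ≠ w)
    (h01 : r c0 c1) (h12 : r c1 c2) (h20 : r c2 c0)
    (h0w : r c0 w) (h1w : r c1 w) (h2w : r c2 w)
    (hdom : ∀ x ∈ ({c0, c1, c2, w} : Set V), ∀ y ∉ ({c0, c1, c2, w} : Set V),
      r x y) :
    ¬ Contains r (cpArc (n - 4)) := by
  rintro ⟨φ, hinj, hhom⟩
  have hbij : φ.Bijective :=
    (Fintype.bijective_iff_injective_and_card φ).mpr ⟨hinj, by simp [hcard]; omega⟩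
  have hAinj : Function.Injective ![c0, c1, c2, w] := by
    intro i j hij
    fin_cases i <;> fin_cases j <;> simp_all [eq_comm]
  obtain ⟨i, hi⟩ := exists_le_apply_of_injective (g := fun i ↦ ((Equiv.ofBijective φ hbij).symm
    (![c0, c1, c2, w] i)).val) (Fin.val_injective.comp ((Equiv.injective _).comp hAinj))
  obtain ⟨h0, h1, h2, h3⟩ := cpArc_head_mem_of_closed (S := φ ⁻¹' {c0, c1, c2, w})
    (fun u v huv hv ↦ ht.mem_of_rel_of_dominates hdom (hhom u v huv) hv) hi
    (by rw [Set.mem_preimage, Equiv.ofBijective_apply_symm_apply φ hbij]; fin_cases i <;> simp)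
  exact not_diamond_of_triangle_dominating_sink ht h01 h12 h20 h0w h1w h2w h0 h1 h2 h3
    (hinj.ne (by simp)) (hhom _ _ (by simp [cpArc])) (hhom _ _ (by simp [cpArc]))
    (hhom _ _ (by simp [cpArc])) (hhom _ _ (by simp [cpArc]))
end

section
/- Let n ≥ 5 and let T be a tournament on n+1 vertices containing no copy of CP(2,2;n−4). Suppose v_1,…,v_{n−1} are distinct vertices of T such that (v_1,v_2),(v_1,v_3),(v_2,v_4),(v_3,v_4) and (v_i,v_{i+1}) for 4 ≤ i ≤ n−2 are all arcs of T (so they form a copy of CP(2,2;n−5)), and let v be any of the two vertices of T not among v_1,…,v_{n−1}. Then (v,v_i) is an arc of T for every i with 4 ≤ i ≤ n−1. -/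
/-! If `v` did not dominate some `w i` with `i ≥ 3`, then `w i → v`; let `w k` be the last
vertex of the path `w 3 → ⋯ → w (n-2)` with `w k → v`. Then `v → w (k+1)` whenever `w (k+1)`
exists, so inserting `v` right after `w k` lengthens the path by one and turns the copy of
`CP(2,2;n-5)` into a copy of `CP(2,2;n-4)`. -/

namespace Fin

variable {α : Type*} {m : ℕ} {p : Fin (m + 1)} {x : α} {f : Fin m → α}

theorem insertNth_injective (hf : Function.Injective f) (hx : x ∉ Set.range f) :
    Function.Injective (insertNth p x f) := by
  intro a b hab
  rcases eq_self_or_eq_succAbove p a with rfl | ⟨a, rfl⟩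
  · rcases eq_self_or_eq_succAbove a b with rfl | ⟨b, rfl⟩
    · rfl
    · simp only [insertNth_apply_same, insertNth_apply_succAbove] at hab
      exact absurd ⟨b, hab.symm⟩ hx
  · rcases eq_self_or_eq_succAbove p b with rfl | ⟨b, rfl⟩
    · simp only [insertNth_apply_same, insertNth_apply_succAbove] at hab
      exact absurd ⟨a, hab⟩ hx
    · simp only [insertNth_apply_succAbove] at hab
      rw [hf hab]

theorem insertNth_apply_of_val_lt {j : Fin (m + 1)} (h : j.val < p.val) :
    (insertNth p x f : Fin (m + 1) → α) j = f ⟨j, by omega⟩ := by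
  have hj : j = p.succAbove ⟨j, by omega⟩ := by
    rw [succAbove_of_castSucc_lt _ _ h]; rfl
  conv_lhs => rw [hj]
  exact insertNth_apply_succAbove ..

theorem insertNth_apply_of_val_eq {j : Fin (m + 1)} (h : j.val = p.val) :
    (insertNth p x f : Fin (m + 1) → α) j = x := by
  obtain rfl := Fin.ext h
  exact insertNth_apply_same ..

theorem insertNth_apply_of_lt_val {j : Fin (m + 1)} (h : p.val < j.val) :
    (insertNth p x f : Fin (m + 1) → α) j = f ⟨j - 1, by omega⟩ := by
  have hj : j = p.succAbove ⟨j - 1, by omega⟩ := by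
    rw [succAbove_of_le_castSucc _ _ (by simp only [le_def, val_castSucc]; omega)]
    ext
    simp only [val_succ]
    omega
  conv_lhs => rw [hj]
  exact insertNth_apply_succAbove ..

end Fin

section Digraph

variable {V : Type*} {r : V → V → Prop}

theorem IsTournament.rel_of_not_rel_s13 (ht : IsTournament r) {x y : V} (hxy : x ≠ y)
    (h : ¬ r x y) : r y x :=
  (ht.2 y x hxy.symm).2 h

theorem IsTournament.exists_last_rel_to (ht : IsTournament r) {m s : ℕ} {f : Fin m → V}
    {v : V} (hv : v ∉ Set.range f) {i : Fin m} (hi : s ≤ i.val) (hiv : r (f i) v) :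
    ∃ k : Fin m, s ≤ k.val ∧ r (f k) v ∧ ∀ j, k < j → r v (f j) := by
  classical
  obtain ⟨k, hk, hmax⟩ := (Finset.univ.filter fun j => s ≤ j.val ∧ r (f j) v).exists_max_image id
    ⟨i, by simp [hi, hiv]⟩
  simp only [Finset.mem_filter, Finset.mem_univ, true_and, id, and_imp] at hk hmax
  refine ⟨k, hk.1, hk.2, fun j hkj => ht.rel_of_not_rel_s13 (fun h => hv ⟨j, h⟩) fun hjv => ?_⟩
  exact (hmax j (by omega) hjv).not_gt hkj

def IsPathFrom (r : V → V → Prop) (s : ℕ) {m : ℕ} (f : Fin m → V) : Prop :=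
  ∀ i : Fin m, ∀ h : i.val + 1 < m, s ≤ i.val → r (f i) (f ⟨i.val + 1, h⟩)

theorem IsPathFrom.insertNth {m s : ℕ} {f : Fin m → V} (hf : IsPathFrom r s f) {k : Fin m}
    {v : V} (hk : s ≤ k.val) (hkv : r (f k) v)
    (hvk : ∀ h : k.val + 1 < m, r v (f ⟨k.val + 1, h⟩)) :
    IsPathFrom r s (Fin.insertNth k.succ v f : Fin (m + 1) → V) := by
  intro j hj hsj
  rcases (by omega : j.val < k.val ∨ j.val = k.val ∨ j.val = k.val + 1 ∨ k.val + 1 < j.val)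
    with hjk | hjk | hjk | hjk
  · rw [Fin.insertNth_apply_of_val_lt (by simp only [Fin.val_succ]; omega),
      Fin.insertNth_apply_of_val_lt (by simp only [Fin.val_succ]; omega)]
    exact hf _ _ hsj
  · rw [Fin.insertNth_apply_of_val_lt (by simp only [Fin.val_succ]; omega),
      Fin.insertNth_apply_of_val_eq (by simp only [Fin.val_succ]; omega)]
    convert hkv using 2
    exact Fin.ext hjk
  · rw [Fin.insertNth_apply_of_val_eq (by simp only [Fin.val_succ]; omega),
      Fin.insertNth_apply_of_lt_val (by simp only [Fin.val_succ]; omega)]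
    convert hvk (by omega) using 3
    simp only; omega
  · rw [Fin.insertNth_apply_of_lt_val (by simp only [Fin.val_succ]; omega),
      Fin.insertNth_apply_of_lt_val (by simp only [Fin.val_succ]; omega)]
    convert hf ⟨j - 1, by omega⟩ (by simp only; omega) (by simp only; omega) using 3
    simp only; omega

theorem contains_cpArc_of_isPathFrom {ℓ m : ℕ} (hm : m = ℓ + 4) {f : Fin m → V}
    (hf : Function.Injective f)
    (h01 : r (f ⟨0, by omega⟩) (f ⟨1, by omega⟩)) (h02 : r (f ⟨0, by omega⟩) (f ⟨2, by omega⟩))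
    (h13 : r (f ⟨1, by omega⟩) (f ⟨3, by omega⟩)) (h23 : r (f ⟨2, by omega⟩) (f ⟨3, by omega⟩))
    (hpath : IsPathFrom r 3 f) : Contains r (cpArc ℓ) := by
  subst hm
  refine ⟨f, hf, ?_⟩
  rintro ⟨a, ha⟩ ⟨b, hb⟩ (⟨rfl, rfl⟩ | ⟨rfl, rfl⟩ | ⟨rfl, rfl⟩ | ⟨rfl, rfl⟩ | ⟨h3, rfl⟩)
  exacts [h01, h02, h13, h23, hpath _ hb h3]

end Digraph

/-- Claim 2 in the proof of Theorem 3: let `n ≥ 5` and let `T` be a tournament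
on `n + 1` vertices with no copy of `CP(2,2; n-4)`. If the distinct vertices
`w 0, …, w (n-2)` (the paper's `v_1, …, v_{n-1}`) form a copy of
`CP(2,2; n-5)` and `v` is not among them, then `v` dominates `w i` for every
`i ≥ 3` (the paper's `v_4, …, v_{n-1}`). -/
theorem claim_dominates_path (n : ℕ) (hn : 5 ≤ n)
    (V : Type) (r : V → V → Prop) (ht : IsTournament r)
    (hno : ¬ Contains r (cpArc (n - 4)))
    (w : Fin (n - 1) → V) (hinj : Function.Injective w)
    (h01 : r (w ⟨0, by omega⟩) (w ⟨1, by omega⟩))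
    (h02 : r (w ⟨0, by omega⟩) (w ⟨2, by omega⟩))
    (h13 : r (w ⟨1, by omega⟩) (w ⟨3, by omega⟩))
    (h23 : r (w ⟨2, by omega⟩) (w ⟨3, by omega⟩))
    (hpath : ∀ i : Fin (n - 1), ∀ h : i.val + 1 < n - 1, 3 ≤ i.val →
      r (w i) (w ⟨i.val + 1, h⟩))
    (v : V) (hv : v ∉ Set.range w) :
    ∀ i : Fin (n - 1), 3 ≤ i.val → r v (w i) := by
  intro i hi
  by_contra hvi
  obtain ⟨k, hk, hkv, hlast⟩ :=
    ht.exists_last_rel_to hv hi (ht.rel_of_not_rel_s13 (fun h => hv ⟨i, h.symm⟩) hvi)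
  have hhead : ∀ (j : Fin (n - 1 + 1)) (hj : j.val ≤ 3),
      (Fin.insertNth k.succ v w : Fin (n - 1 + 1) → V) j = w ⟨j, by omega⟩ :=
    fun j hj => Fin.insertNth_apply_of_val_lt (Nat.lt_succ_of_le (hj.trans hk))
  refine hno (contains_cpArc_of_isPathFrom (by omega : n - 1 + 1 = n - 4 + 4)
    (Fin.insertNth_injective hinj hv) ?_ ?_ ?_ ?_
    (IsPathFrom.insertNth hpath hk hkv fun _ => hlast _ (Fin.lt_def.2 (by simp))))
  all_goals rw [hhead _ (by simp), hhead _ (by simp)]; assumption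
end
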